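/- (Miquel's theorem, circle version) Given a triangle ABC in the Euclidean plane and points A' on segment BC, B' on segment CA, C' on segment AB, the three circles through (A, B', C'), (B, C', A'), and (C, A', B') have a common point. -/
import Mathlib


open EuclideanGeometry Module

noncomputable section

namespace MiquelAux

variable {V : Type*} {P : Type*} [NormedAddCommGroup V] [InnerProductSpace ℝ V] [MetricSpace P]
  [NormedAddTorsor V P]

/-- Any three points are cospherical or collinear. -/
theorem cosph_or_coll_three (p q r : P) :
    Cospherical ({p, q, r} : Set P) ∨ Collinear ℝ ({p, q, r} : Set P) := by
  by_cases h : Collinear ℝ ({p, q, r} : Set P)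
  · exact Or.inr h
  · left
    let t : Affine.Triangle ℝ P := ⟨![p, q, r], affineIndependent_iff_not_collinear_set.2 h⟩
    rw [cospherical_iff_exists_sphere]
    refine ⟨t.circumsphere, ?_⟩
    simp_rw [Set.insert_subset_iff, Set.singleton_subset_iff, Sphere.mem_coe]
    refine ⟨?_, ?_, ?_⟩
    · have := t.mem_circumsphere 0
      simpa [t] using this
    · have := t.mem_circumsphere 1
      simpa [t] using this
    · have := t.mem_circumsphere 2
      simpa [t] using this

theorem cosph_or_coll_of_eq {s : Set P} (p q r : P) (h : s = {p, q, r}) :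
    Cospherical s ∨ Collinear ℝ s := h ▸ cosph_or_coll_three p q r

variable [hd2 : Fact (finrank ℝ V = 2)] [Module.Oriented ℝ V (Fin 2)]

/-- Replacing the left point of a doubled oriented angle by another point on the same line
through the vertex. -/
theorem two_zsmul_oangle_eq_of_collinear_left {x p₁ p₂ y : P}
    (hcol : Collinear ℝ ({p₁, x, p₂} : Set P)) (h₁ : p₁ ≠ x) (h₂ : p₂ ≠ x) (hy : y ≠ x) :
    (2 : ℤ) • ∡ p₁ x y = (2 : ℤ) • ∡ p₂ x y := by
  have hadd : ∡ p₁ x p₂ + ∡ p₂ x y = ∡ p₁ x y := oangle_add h₁ h₂ hy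
  rw [← hadd, smul_add]
  rcases oangle_eq_zero_or_eq_pi_iff_collinear.2 hcol with h | h <;> rw [h] <;>
    simp [Real.Angle.two_zsmul_coe_pi]

theorem two_zsmul_oangle_eq_of_collinear_right {x p₁ p₂ y : P}
    (hcol : Collinear ℝ ({p₁, x, p₂} : Set P)) (h₁ : p₁ ≠ x) (h₂ : p₂ ≠ x) (hy : y ≠ x) :
    (2 : ℤ) • ∡ y x p₁ = (2 : ℤ) • ∡ y x p₂ := by
  rw [oangle_rev p₁ x y, oangle_rev p₂ x y, smul_neg, smul_neg,
    two_zsmul_oangle_eq_of_collinear_left hcol h₁ h₂ hy]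

end MiquelAux

open MiquelAux

instance : Fact (finrank ℝ (EuclideanSpace ℝ (Fin 2)) = 2) := ⟨finrank_euclideanSpace_fin⟩

instance : Module.Oriented ℝ (EuclideanSpace ℝ (Fin 2)) (Fin 2) :=
  ⟨Basis.orientation (EuclideanSpace.basisFun (Fin 2) ℝ).toBasis⟩

set_option maxHeartbeats 4000000 in
/-- Miquel's theorem: given a triangle ABC and points A' on BC, B' on CA, C' on AB,
the three circles through (A,B',C'), (B,C',A'), (C,A',B') have a common point
(a degenerate collinear triple being interpreted as the line through it). -/
theorem stmt10 (A B C A' B' C' : EuclideanSpace ℝ (Fin 2))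
    (hABC : AffineIndependent ℝ ![A, B, C])
    (hA' : A' ∈ segment ℝ B C) (hB' : B' ∈ segment ℝ C A) (hC' : C' ∈ segment ℝ A B) :
    ∃ P : EuclideanSpace ℝ (Fin 2),
      (Cospherical ({A, B', C', P} : Set (EuclideanSpace ℝ (Fin 2))) ∨
        Collinear ℝ ({A, B', C', P} : Set (EuclideanSpace ℝ (Fin 2)))) ∧
      (Cospherical ({B, C', A', P} : Set (EuclideanSpace ℝ (Fin 2))) ∨
        Collinear ℝ ({B, C', A', P} : Set (EuclideanSpace ℝ (Fin 2)))) ∧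
      (Cospherical ({C, A', B', P} : Set (EuclideanSpace ℝ (Fin 2))) ∨
        Collinear ℝ ({C, A', B', P} : Set (EuclideanSpace ℝ (Fin 2)))) := by
  have hnc : ¬Collinear ℝ ({A, B, C} : Set (EuclideanSpace ℝ (Fin 2))) :=
    affineIndependent_iff_not_collinear_set.1 hABC
  -- collinearity facts from the segment hypotheses
  have hcolB : Collinear ℝ ({B, A', C} : Set (EuclideanSpace ℝ (Fin 2))) :=
    (mem_segment_iff_wbtw.1 hA').collinear
  have hcolC : Collinear ℝ ({C, B', A} : Set (EuclideanSpace ℝ (Fin 2))) :=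
    (mem_segment_iff_wbtw.1 hB').collinear
  have hcolA : Collinear ℝ ({A, C', B} : Set (EuclideanSpace ℝ (Fin 2))) :=
    (mem_segment_iff_wbtw.1 hC').collinear
  -- degenerate cases
  by_cases hB'A : B' = A
  · exact ⟨A', cosph_or_coll_of_eq A C' A' (by ext x; simp only [Set.mem_insert_iff, Set.mem_singleton_iff, hB'A]; tauto),
      cosph_or_coll_of_eq B C' A' (by ext x; simp only [Set.mem_insert_iff, Set.mem_singleton_iff]; tauto),
      cosph_or_coll_of_eq C A' A (by ext x; simp only [Set.mem_insert_iff, Set.mem_singleton_iff, hB'A]; tauto)⟩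
  by_cases hC'A : C' = A
  · exact ⟨A', cosph_or_coll_of_eq A B' A' (by ext x; simp only [Set.mem_insert_iff, Set.mem_singleton_iff, hC'A]; tauto),
      cosph_or_coll_of_eq B A A' (by ext x; simp only [Set.mem_insert_iff, Set.mem_singleton_iff, hC'A]; tauto),
      cosph_or_coll_of_eq C A' B' (by ext x; simp only [Set.mem_insert_iff, Set.mem_singleton_iff]; tauto)⟩
  by_cases hA'B : A' = B
  · exact ⟨B', cosph_or_coll_of_eq A B' C' (by ext x; simp only [Set.mem_insert_iff, Set.mem_singleton_iff]; tauto),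
      cosph_or_coll_of_eq B C' B' (by ext x; simp only [Set.mem_insert_iff, Set.mem_singleton_iff, hA'B]; tauto),
      cosph_or_coll_of_eq C B B' (by ext x; simp only [Set.mem_insert_iff, Set.mem_singleton_iff, hA'B]; tauto)⟩
  by_cases hC'B : C' = B
  · exact ⟨B', cosph_or_coll_of_eq A B' B (by ext x; simp only [Set.mem_insert_iff, Set.mem_singleton_iff, hC'B]; tauto),
      cosph_or_coll_of_eq B A' B' (by ext x; simp only [Set.mem_insert_iff, Set.mem_singleton_iff, hC'B]; tauto),
      cosph_or_coll_of_eq C A' B' (by ext x; simp only [Set.mem_insert_iff, Set.mem_singleton_iff]; tauto)⟩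
  by_cases hA'C : A' = C
  · exact ⟨C', cosph_or_coll_of_eq A B' C' (by ext x; simp only [Set.mem_insert_iff, Set.mem_singleton_iff]; tauto),
      cosph_or_coll_of_eq B C' C (by ext x; simp only [Set.mem_insert_iff, Set.mem_singleton_iff, hA'C]; tauto),
      cosph_or_coll_of_eq C B' C' (by ext x; simp only [Set.mem_insert_iff, Set.mem_singleton_iff, hA'C]; tauto)⟩
  by_cases hB'C : B' = C
  · exact ⟨C', cosph_or_coll_of_eq A C C' (by ext x; simp only [Set.mem_insert_iff, Set.mem_singleton_iff, hB'C]; tauto),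
      cosph_or_coll_of_eq B C' A' (by ext x; simp only [Set.mem_insert_iff, Set.mem_singleton_iff]; tauto),
      cosph_or_coll_of_eq C A' C' (by ext x; simp only [Set.mem_insert_iff, Set.mem_singleton_iff, hB'C]; tauto)⟩
  -- main case: pairwise distinctness
  have hA'C' : A' ≠ C' := by
    intro h
    apply hnc
    refine collinear_triple_of_mem_affineSpan_pair (p₄ := A') (p₅ := B) ?_ ?_ ?_
    · have := hcolA.mem_affineSpan_of_mem_of_ne (p₁ := C') (p₂ := B) (p₃ := A)
        (by simp) (by simp) (by simp) hC'B
      rwa [← h] at this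
    · exact right_mem_affineSpan_pair ℝ A' B
    · exact hcolB.mem_affineSpan_of_mem_of_ne (by simp) (by simp) (by simp) hA'B
  have hB'C' : B' ≠ C' := by
    intro h
    apply hnc
    refine collinear_triple_of_mem_affineSpan_pair (p₄ := B') (p₅ := A) ?_ ?_ ?_
    · exact right_mem_affineSpan_pair ℝ B' A
    · have := hcolA.mem_affineSpan_of_mem_of_ne (p₁ := C') (p₂ := A) (p₃ := B)
        (by simp) (by simp) (by simp) hC'A
      rwa [← h] at this
    · exact hcolC.mem_affineSpan_of_mem_of_ne (by simp) (by simp) (by simp) hB'A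
  have hA'B' : A' ≠ B' := by
    intro h
    apply hnc
    refine collinear_triple_of_mem_affineSpan_pair (p₄ := A') (p₅ := C) ?_ ?_ ?_
    · have := hcolC.mem_affineSpan_of_mem_of_ne (p₁ := B') (p₂ := C) (p₃ := A)
        (by simp) (by simp) (by simp) hB'C
      rwa [← h] at this
    · exact hcolB.mem_affineSpan_of_mem_of_ne (by simp) (by simp) (by simp) hA'C
    · exact right_mem_affineSpan_pair ℝ A' C
  -- the two triples are not collinear
  have hn1 : ¬Collinear ℝ ({A, B', C'} : Set (EuclideanSpace ℝ (Fin 2))) := by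
    intro h
    apply hnc
    refine collinear_triple_of_mem_affineSpan_pair (p₄ := A) (p₅ := B') ?_ ?_ ?_
    · exact left_mem_affineSpan_pair ℝ A B'
    · -- B ∈ line[A, B']: B ∈ line[A, C'] and C' ∈ line[A, B']... use via C'
      have hC'mem : C' ∈ line[ℝ, A, B'] :=
        h.mem_affineSpan_of_mem_of_ne (by simp) (by simp) (by simp) (Ne.symm hB'A)
      have hBmem : B ∈ line[ℝ, A, C'] :=
        hcolA.mem_affineSpan_of_mem_of_ne (by simp) (by simp) (by simp) (Ne.symm hC'A)
      have hsub : line[ℝ, A, C'] ≤ line[ℝ, A, B'] := by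
        apply affineSpan_le.2
        rintro x (rfl | rfl)
        · exact left_mem_affineSpan_pair ℝ _ _
        · exact hC'mem
      exact hsub hBmem
    · exact hcolC.mem_affineSpan_of_mem_of_ne (by simp) (by simp) (by simp) (Ne.symm hB'A)
  have hn2 : ¬Collinear ℝ ({B, C', A'} : Set (EuclideanSpace ℝ (Fin 2))) := by
    intro h
    apply hnc
    refine collinear_triple_of_mem_affineSpan_pair (p₄ := B) (p₅ := C') ?_ ?_ ?_
    · exact hcolA.mem_affineSpan_of_mem_of_ne (by simp) (by simp) (by simp) (Ne.symm hC'B)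
    · exact left_mem_affineSpan_pair ℝ B C'
    · -- C ∈ line[B, C']: C ∈ line[B, A'], A' ∈ line[B, C']
      have hA'mem : A' ∈ line[ℝ, B, C'] :=
        h.mem_affineSpan_of_mem_of_ne (by simp) (by simp) (by simp) (Ne.symm hC'B)
      have hCmem : C ∈ line[ℝ, B, A'] :=
        hcolB.mem_affineSpan_of_mem_of_ne (by simp) (by simp) (by simp) (Ne.symm hA'B)
      have hsub : line[ℝ, B, A'] ≤ line[ℝ, B, C'] := by
        apply affineSpan_le.2
        rintro x (rfl | rfl)
        · exact left_mem_affineSpan_pair ℝ _ _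
        · exact hA'mem
      exact hsub hCmem
  -- circumscribed spheres
  have h1 : Cospherical ({A, B', C'} : Set (EuclideanSpace ℝ (Fin 2))) :=
    (cosph_or_coll_three A B' C').resolve_right hn1
  have h2 : Cospherical ({B, C', A'} : Set (EuclideanSpace ℝ (Fin 2))) :=
    (cosph_or_coll_three B C' A').resolve_right hn2
  obtain ⟨S1, hS1⟩ := cospherical_iff_exists_sphere.1 h1
  obtain ⟨S2, hS2⟩ := cospherical_iff_exists_sphere.1 h2
  have hA1 : A ∈ S1 := hS1 (by simp)
  have hB'1 : B' ∈ S1 := hS1 (by simp)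
  have hC'1 : C' ∈ S1 := hS1 (by simp)
  have hB2 : B ∈ S2 := hS2 (by simp)
  have hC'2 : C' ∈ S2 := hS2 (by simp)
  have hA'2 : A' ∈ S2 := hS2 (by simp)
  -- reorderings of the collinearity facts
  have hcolB' : Collinear ℝ ({C, A', B} : Set (EuclideanSpace ℝ (Fin 2))) :=
    Collinear.subset (by intro x hx; simp at hx ⊢; tauto) hcolB
  have hcolA' : Collinear ℝ ({B, C', A} : Set (EuclideanSpace ℝ (Fin 2))) :=
    Collinear.subset (by intro x hx; simp at hx ⊢; tauto) hcolA
  have hcolC' : Collinear ℝ ({A, B', C} : Set (EuclideanSpace ℝ (Fin 2))) :=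
    Collinear.subset (by intro x hx; simp at hx ⊢; tauto) hcolC
  by_cases hcc : S1.center = S2.center
  · -- the two spheres coincide; take P = A'
    have hrr : S1.radius = S2.radius := by
      rw [← mem_sphere.1 hC'1, ← mem_sphere.1 hC'2, hcc]
    refine ⟨A', Or.inl ⟨S1.center, S1.radius, ?_⟩,
      cosph_or_coll_of_eq B C' A' (by ext x; simp; try tauto),
      cosph_or_coll_of_eq C A' B' (by ext x; simp; try tauto)⟩
    intro p hp
    simp only [Set.mem_insert_iff, Set.mem_singleton_iff] at hp
    rcases hp with rfl | rfl | rfl | rfl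
    · exact mem_sphere.1 hA1
    · exact mem_sphere.1 hB'1
    · exact mem_sphere.1 hC'1
    · rw [hcc, hrr]; exact mem_sphere.1 hA'2
  · -- generic case: P is the reflection of C' in the line of the centers
    set L : AffineSubspace ℝ (EuclideanSpace ℝ (Fin 2)) := line[ℝ, S1.center, S2.center] with hL
    haveI : Nonempty L := ⟨⟨S1.center, left_mem_affineSpan_pair ℝ _ _⟩⟩
    set P : EuclideanSpace ℝ (Fin 2) := EuclideanGeometry.reflection L C' with hPdef
    have hP1 : P ∈ S1 := by
      rw [mem_sphere, ← mem_sphere.1 hC'1, dist_comm P, dist_comm C']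
      exact EuclideanGeometry.dist_reflection_eq_of_mem L
        (left_mem_affineSpan_pair ℝ _ _) C'
    have hP2 : P ∈ S2 := by
      rw [mem_sphere, ← mem_sphere.1 hC'2, dist_comm P, dist_comm C']
      exact EuclideanGeometry.dist_reflection_eq_of_mem L
        (right_mem_affineSpan_pair ℝ _ _) C'
    have goal1 : Cospherical ({A, B', C', P} : Set (EuclideanSpace ℝ (Fin 2))) := by
      refine ⟨S1.center, S1.radius, ?_⟩
      intro p hp
      simp only [Set.mem_insert_iff, Set.mem_singleton_iff] at hp
      rcases hp with rfl | rfl | rfl | rfl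
      · exact mem_sphere.1 hA1
      · exact mem_sphere.1 hB'1
      · exact mem_sphere.1 hC'1
      · exact mem_sphere.1 hP1
    have goal2 : Cospherical ({B, C', A', P} : Set (EuclideanSpace ℝ (Fin 2))) := by
      refine ⟨S2.center, S2.radius, ?_⟩
      intro p hp
      simp only [Set.mem_insert_iff, Set.mem_singleton_iff] at hp
      rcases hp with rfl | rfl | rfl | rfl
      · exact mem_sphere.1 hB2
      · exact mem_sphere.1 hC'2
      · exact mem_sphere.1 hA'2
      · exact mem_sphere.1 hP2
    refine ⟨P, Or.inl goal1, Or.inl goal2, ?_⟩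
    -- third circle
    by_cases hPC : P = C
    · exact cosph_or_coll_of_eq C A' B' (by rw [hPC]; ext x; simp; try tauto)
    by_cases hPA' : P = A'
    · exact cosph_or_coll_of_eq C A' B' (by rw [hPA']; ext x; simp; try tauto)
    by_cases hPB' : P = B'
    · exact cosph_or_coll_of_eq C A' B' (by rw [hPB']; ext x; simp; try tauto)
    apply cospherical_or_collinear_of_two_zsmul_oangle_eq
    by_cases hPC' : P = C'
    · -- tangent case
      have hC'L : C' ∈ L := (EuclideanGeometry.reflection_eq_self_iff C').1 hPC'
      have hcolo : Collinear ℝ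
          ({S2.center, C', S1.center} : Set (EuclideanSpace ℝ (Fin 2))) := by
        have := collinear_insert_of_mem_affineSpan_pair (k := ℝ) hC'L
        exact Collinear.subset (by intro x hx; simp at hx ⊢; tauto) this
      have ho1C' : S1.center ≠ C' := by
        intro h
        have hr0 : S1.radius = 0 := by rw [← mem_sphere.1 hC'1, h, dist_self]
        have : dist A S1.center = 0 := by rw [mem_sphere.1 hA1, hr0]
        rw [dist_eq_zero] at this
        exact hC'A (by rw [← h, ← this])
      have ho2C' : S2.center ≠ C' := by
        intro h
        have hr0 : S2.radius = 0 := by rw [← mem_sphere.1 hC'2, h, dist_self]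
        have : dist B S2.center = 0 := by rw [mem_sphere.1 hB2, hr0]
        rw [dist_eq_zero] at this
        exact hC'B (by rw [← h, ← this])
      calc (2 : ℤ) • ∡ C A' P
          = (2 : ℤ) • ∡ B A' P :=
            two_zsmul_oangle_eq_of_collinear_left hcolB' (Ne.symm hA'C) (Ne.symm hA'B)
              hPA'
        _ = ∡ B S2.center P :=
            (Sphere.oangle_center_eq_two_zsmul_oangle hB2 hA'2 hP2 hA'B
              (fun h => hPA' h.symm)).symm
        _ = ∡ B S2.center C' := by rw [hPC']
        _ = Real.pi - (2 : ℤ) • ∡ S2.center C' B :=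
            Sphere.oangle_eq_pi_sub_two_zsmul_oangle_center_left hB2 hC'2 (Ne.symm hC'B)
        _ = Real.pi - (2 : ℤ) • ∡ S1.center C' B := by
            rw [two_zsmul_oangle_eq_of_collinear_left hcolo ho2C' ho1C' (Ne.symm hC'B)]
        _ = Real.pi - (2 : ℤ) • ∡ S1.center C' A := by
            rw [two_zsmul_oangle_eq_of_collinear_right
              (Collinear.subset (by intro x hx; simp at hx ⊢; tauto) hcolA)
              (Ne.symm hC'B) (Ne.symm hC'A) ho1C']
        _ = ∡ A S1.center C' :=
            (Sphere.oangle_eq_pi_sub_two_zsmul_oangle_center_left hA1 hC'1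
              (Ne.symm hC'A)).symm
        _ = ∡ A S1.center P := by rw [hPC']
        _ = (2 : ℤ) • ∡ A B' P :=
            Sphere.oangle_center_eq_two_zsmul_oangle hA1 hB'1 hP1 hB'A
              (fun h => hPB' h.symm)
        _ = (2 : ℤ) • ∡ C B' P :=
            two_zsmul_oangle_eq_of_collinear_left hcolC' (Ne.symm hB'A) (Ne.symm hB'C)
              hPB'
    · -- generic (non-tangent) case
      calc (2 : ℤ) • ∡ C A' P
          = (2 : ℤ) • ∡ B A' P :=
            two_zsmul_oangle_eq_of_collinear_left hcolB' (Ne.symm hA'C) (Ne.symm hA'B)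
              hPA'
        _ = (2 : ℤ) • ∡ B C' P :=
            Sphere.two_zsmul_oangle_eq hB2 hA'2 hC'2 hP2 hA'B (fun h => hPA' h.symm)
              hC'B (fun h => hPC' h.symm)
        _ = (2 : ℤ) • ∡ A C' P :=
            two_zsmul_oangle_eq_of_collinear_left hcolA' (Ne.symm hC'B) (Ne.symm hC'A)
              hPC'
        _ = (2 : ℤ) • ∡ A B' P :=
            Sphere.two_zsmul_oangle_eq hA1 hC'1 hB'1 hP1 hC'A (fun h => hPC' h.symm)
              hB'A (fun h => hPB' h.symm)
        _ = (2 : ℤ) • ∡ C B' P :=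
            two_zsmul_oangle_eq_of_collinear_left hcolC' (Ne.symm hB'A) (Ne.symm hB'C)
              hPB'
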